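/- arXiv:2510.02308 — 4 statements merged into one kernel-verified Lean document; each statement's English description precedes it below -/
import Mathlib

section
/- Let s > 0, let y₁,…,y_n ∈ ℝ^p and η₁,…,η_n ∈ ℝ^p be arbitrary vectors, and set x_i = y_i + η_i. Let A and Ā be the n×n matrices with entries A_{ij} = K_s(x_i − x_j) and Ā_{ij} = K_s(y_i − y_j). Then ‖A − Ā‖_F² ≤ (2/e)/s² · Σ_{i=1}^n Σ_{j=1}^n ‖η_i − η_j‖₂². -/
open scoped BigOperators

/-- The Gaussian kernel with bandwidth `s` on `ℝ^p`: `K_s(z) = exp(−‖z‖₂²/s²)`. -/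
noncomputable def gaussKernel {p : ℕ} (s : ℝ) (z : EuclideanSpace ℝ (Fin p)) : ℝ :=
  Real.exp (-‖z‖ ^ 2 / s ^ 2)

private lemma key_ineq (u : ℝ) : 2 * u * Real.exp (-u ^ 2) ≤ Real.sqrt (2 / Real.exp 1) := by
  rcases le_or_gt u 0 with hu | hu
  · have : 2 * u * Real.exp (-u ^ 2) ≤ 0 :=
      mul_nonpos_of_nonpos_of_nonneg (by linarith) (Real.exp_pos _).le
    exact this.trans (Real.sqrt_nonneg _)
  · apply Real.le_sqrt_of_sq_le
    have h1 : (2 * u ^ 2 - 1) + 1 ≤ Real.exp (2 * u ^ 2 - 1) := Real.add_one_le_exp _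
    have h2 : Real.exp (2 * u ^ 2 - 1) * Real.exp 1 = Real.exp (2 * u ^ 2) := by
      rw [← Real.exp_add]; ring_nf
    have h3 : Real.exp (-u ^ 2) * Real.exp (-u ^ 2) * Real.exp (2 * u ^ 2) = 1 := by
      rw [← Real.exp_add, ← Real.exp_add,
        show -u ^ 2 + -u ^ 2 + 2 * u ^ 2 = 0 by ring, Real.exp_zero]
    have h4 : (0:ℝ) < Real.exp 1 := Real.exp_pos 1
    have h6 : (0:ℝ) < Real.exp (-u ^ 2) := Real.exp_pos _
    have h8 : 2 * u ^ 2 * Real.exp 1 ≤ Real.exp (2 * u ^ 2) := by nlinarith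
    have h9 := mul_le_mul_of_nonneg_right h8 (mul_nonneg h6.le h6.le)
    rw [le_div_iff₀ h4]
    nlinarith [h9, h3]

private lemma deriv_bound (s : ℝ) (hs : 0 < s) (t : ℝ) :
    |Real.exp (-t ^ 2 / s ^ 2) * (-(2 * t) / s ^ 2)| ≤ Real.sqrt (2 / Real.exp 1) / s := by
  have hkey := key_ineq (|t| / s)
  have h2 : |Real.exp (-t ^ 2 / s ^ 2) * (-(2 * t) / s ^ 2)|
      = 2 * (|t| / s) * Real.exp (-(|t| / s) ^ 2) / s := by
    rw [abs_mul, Real.abs_exp, abs_div, abs_neg, abs_mul, abs_two,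
      abs_of_pos (pow_pos hs 2), show (-(|t| / s) ^ 2 : ℝ) = -t ^ 2 / s ^ 2 by
        rw [div_pow, sq_abs]; ring]
    field_simp
  rw [h2]
  gcongr

private lemma lip (s : ℝ) (hs : 0 < s) (a b : ℝ) :
    |Real.exp (-a ^ 2 / s ^ 2) - Real.exp (-b ^ 2 / s ^ 2)|
      ≤ Real.sqrt (2 / Real.exp 1) / s * |a - b| := by
  have hd : ∀ x : ℝ, HasDerivAt (fun t : ℝ => Real.exp (-t ^ 2 / s ^ 2))
      (Real.exp (-x ^ 2 / s ^ 2) * (-(2 * x) / s ^ 2)) x := by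
    intro x
    have h1 : HasDerivAt (fun t : ℝ => -t ^ 2 / s ^ 2) (-(2 * x) / s ^ 2) x := by
      have := ((hasDerivAt_pow 2 x).div_const (s ^ 2)).neg
      have h2 : (fun t : ℝ => -(t ^ 2 / s ^ 2)) = fun t : ℝ => -t ^ 2 / s ^ 2 := by
        funext t; ring
      rw [show (-fun x : ℝ => x ^ 2 / s ^ 2) = (fun t : ℝ => -(t ^ 2 / s ^ 2)) from rfl, h2] at this
      refine this.congr_deriv ?_
      simp; ring
    exact h1.exp
  have H := Convex.norm_image_sub_le_of_norm_hasDerivWithin_le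
    (f := fun t : ℝ => Real.exp (-t ^ 2 / s ^ 2))
    (f' := fun x : ℝ => Real.exp (-x ^ 2 / s ^ 2) * (-(2 * x) / s ^ 2))
    (s := Set.univ) (C := Real.sqrt (2 / Real.exp 1) / s)
    (fun x _ => (hd x).hasDerivWithinAt) (fun x _ => deriv_bound s hs x)
    convex_univ (Set.mem_univ b) (Set.mem_univ a)
  simpa [Real.norm_eq_abs] using H

private lemma pointwise {p : ℕ} (s : ℝ) (hs : 0 < s) (v w : EuclideanSpace ℝ (Fin p)) :
    (gaussKernel s (v + w) - gaussKernel s v) ^ 2 ≤ (2 / Real.exp 1) / s ^ 2 * ‖w‖ ^ 2 := by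
  have hlip := lip s hs ‖v + w‖ ‖v‖
  have habs : |‖v + w‖ - ‖v‖| ≤ ‖w‖ := by
    have := abs_norm_sub_norm_le (v + w) v
    simpa using this
  have hC : 0 ≤ Real.sqrt (2 / Real.exp 1) / s := div_nonneg (Real.sqrt_nonneg _) hs.le
  have h1 : |gaussKernel s (v + w) - gaussKernel s v| ≤ Real.sqrt (2 / Real.exp 1) / s * ‖w‖ := by
    unfold gaussKernel
    refine hlip.trans ?_
    exact mul_le_mul_of_nonneg_left habs hC
  have h2 := mul_self_le_mul_self (abs_nonneg _) h1
  have hsq : (Real.sqrt (2 / Real.exp 1) / s) ^ 2 = (2 / Real.exp 1) / s ^ 2 := by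
    rw [div_pow, Real.sq_sqrt (by positivity)]
  calc (gaussKernel s (v + w) - gaussKernel s v) ^ 2
      = |gaussKernel s (v + w) - gaussKernel s v| * |gaussKernel s (v + w) - gaussKernel s v| := by
        rw [abs_mul_abs_self]; ring
    _ ≤ (Real.sqrt (2 / Real.exp 1) / s * ‖w‖) * (Real.sqrt (2 / Real.exp 1) / s * ‖w‖) := h2
    _ = (2 / Real.exp 1) / s ^ 2 * ‖w‖ ^ 2 := by rw [← hsq]; ring

/-- With `x_i = y_i + η_i`, `A_{ij} = K_s(x_i − x_j)`, `Ā_{ij} = K_s(y_i − y_j)`, the squared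
Frobenius norm satisfies `‖A − Ā‖_F² ≤ (2/e)/s² · Σ_{i,j} ‖η_i − η_j‖₂²`. -/
theorem frobenius_sq_diff_adjacency_le {p n : ℕ} (s : ℝ) (hs : 0 < s)
    (y η : Fin n → EuclideanSpace ℝ (Fin p)) :
    ∑ i : Fin n, ∑ j : Fin n,
        (gaussKernel s ((y i + η i) - (y j + η j)) - gaussKernel s (y i - y j)) ^ 2
      ≤ (2 / Real.exp 1) / s ^ 2 * ∑ i : Fin n, ∑ j : Fin n, ‖η i - η j‖ ^ 2 := by
  rw [Finset.mul_sum]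
  refine Finset.sum_le_sum fun i _ => ?_
  rw [Finset.mul_sum]
  refine Finset.sum_le_sum fun j _ => ?_
  have h := pointwise s hs (y i - y j) (η i - η j)
  have hv : (y i - y j) + (η i - η j) = (y i + η i) - (y j + η j) := by abel
  rwa [hv] at h
end

section
/- Let A, Ā ∈ ℝ^{n×n} with 0 ≤ Ā_{ij} ≤ 1 for all i, j. Let d_i = Σ_j A_{ij} and d̄_i = Σ_j Ā_{ij} be the row sums, assume they are all positive, let D and D̄ be the diagonal matrices of the d_i and d̄_i respectively, and set d₀ = min_i min{d_i, d̄_i}. Then ‖D⁻¹ Ā D⁻¹ − D̄⁻¹ Ā D̄⁻¹‖_F ≤ (n/d₀⁴)·(‖A‖₂ + ‖Ā‖₂)·‖A − Ā‖₂. -/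
open scoped BigOperators

/-- Frobenius norm of a real matrix. -/
noncomputable def frobNorm {m n : ℕ} (M : Matrix (Fin m) (Fin n) ℝ) : ℝ :=
  Real.sqrt (∑ i, ∑ j, (M i j) ^ 2)

/-- Spectral (ℓ²-operator) norm of a real matrix. -/
noncomputable def specNorm {m n : ℕ} (M : Matrix (Fin m) (Fin n) ℝ) : ℝ :=
  ‖LinearMap.toContinuousLinearMap (Matrix.toEuclideanLin M)‖

lemma sqrt_sum_sq_tri {ι : Type*} [Fintype ι] (x y : ι → ℝ) :
    Real.sqrt (∑ i, (x i + y i) ^ 2) ≤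
      Real.sqrt (∑ i, (x i) ^ 2) + Real.sqrt (∑ i, (y i) ^ 2) := by
  have h := norm_add_le ((WithLp.equiv 2 (ι → ℝ)).symm x) ((WithLp.equiv 2 (ι → ℝ)).symm y)
  simpa [EuclideanSpace.norm_eq, Real.norm_eq_abs, sq_abs, ← WithLp.toLp_add] using h

lemma rowsum_sq_le {n : ℕ} (B : Matrix (Fin n) (Fin n) ℝ) :
    ∑ i, (∑ j, B i j) ^ 2 ≤ (n : ℝ) * specNorm B ^ 2 := by
  set v : EuclideanSpace ℝ (Fin n) := (WithLp.equiv 2 _).symm (fun _ => 1) with hv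
  have h := (LinearMap.toContinuousLinearMap (Matrix.toEuclideanLin B)).le_opNorm v
  have hnv : ‖v‖ = Real.sqrt n := by
    simp [hv, EuclideanSpace.norm_eq]
  have happ : ‖(LinearMap.toContinuousLinearMap (Matrix.toEuclideanLin B)) v‖
      = Real.sqrt (∑ i, (∑ j, B i j) ^ 2) := by
    simp [EuclideanSpace.norm_eq, Real.norm_eq_abs, sq_abs, Matrix.mulVec, dotProduct, hv]
  rw [happ, hnv] at h
  have h2 : ∑ i, (∑ j, B i j) ^ 2 ≤ (specNorm B * Real.sqrt n) ^ 2 := by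
    rw [← Real.sq_sqrt (by positivity : (0:ℝ) ≤ ∑ i, (∑ j, B i j) ^ 2)]
    exact pow_le_pow_left₀ (Real.sqrt_nonneg _) h 2
  calc ∑ i, (∑ j, B i j) ^ 2 ≤ (specNorm B * Real.sqrt n) ^ 2 := h2
    _ = (n : ℝ) * specNorm B ^ 2 := by
        rw [mul_pow, Real.sq_sqrt (by positivity)]; ring

lemma pow4_le_prod {a b c e f : ℝ} (ha : 0 < a) (hb : a ≤ b) (hc : a ≤ c)
    (he : a ≤ e) (hf : a ≤ f) : a ^ 4 ≤ b * c * e * f := by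
  have hb0 : 0 ≤ b := ha.le.trans hb
  have hc0 : 0 ≤ c := ha.le.trans hc
  have he0 : 0 ≤ e := ha.le.trans he
  have h1 : a * a ≤ b * c := mul_le_mul hb hc ha.le hb0
  have h2 : a * a * a ≤ b * c * e := mul_le_mul h1 he ha.le (mul_nonneg hb0 hc0)
  have h3 : a * a * a * a ≤ b * c * e * f :=
    mul_le_mul h2 hf ha.le (mul_nonneg (mul_nonneg hb0 hc0) he0)
  calc a ^ 4 = a * a * a * a := by ring
    _ ≤ b * c * e * f := h3

lemma sqrt_le_of_sq_le {s c : ℝ} (hc : 0 ≤ c) (h : s ≤ c ^ 2) : Real.sqrt s ≤ c :=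
  (Real.sqrt_le_sqrt h).trans_eq (Real.sqrt_sq hc)

lemma sqrt_sum_mono {ι : Type*} [Fintype ι] {x b : ι → ℝ} (h : ∀ i, |x i| ≤ b i) :
    Real.sqrt (∑ i, (x i) ^ 2) ≤ Real.sqrt (∑ i, (b i) ^ 2) := by
  apply Real.sqrt_le_sqrt
  apply Finset.sum_le_sum
  intro i _
  rw [← sq_abs (x i)]
  exact pow_le_pow_left₀ (abs_nonneg _) (h i) 2

set_option maxHeartbeats 1000000 in
/-- With `d_i, d̄_i` the (positive) row sums of `A, Ā`, `D, D̄` the corresponding diagonal degree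
matrices, `d₀ = min_i min{d_i, d̄_i}`, and `0 ≤ Ā_{ij} ≤ 1`, it holds
`‖D⁻¹ Ā D⁻¹ − D̄⁻¹ Ā D̄⁻¹‖_F ≤ (n/d₀⁴)·(‖A‖₂ + ‖Ā‖₂)·‖A − Ā‖₂`. -/
theorem normalized_adjacency_frobenius_bound {n : ℕ} (A Abar : Matrix (Fin n) (Fin n) ℝ)
    (hAbar : ∀ i j, 0 ≤ Abar i j ∧ Abar i j ≤ 1)
    (hd : ∀ i, 0 < ∑ j, A i j) (hdbar : ∀ i, 0 < ∑ j, Abar i j) :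
    frobNorm
        ((Matrix.diagonal fun i => (∑ j, A i j)⁻¹) * Abar *
            (Matrix.diagonal fun i => (∑ j, A i j)⁻¹) -
          (Matrix.diagonal fun i => (∑ j, Abar i j)⁻¹) * Abar *
            (Matrix.diagonal fun i => (∑ j, Abar i j)⁻¹))
      ≤ (n : ℝ) / (⨅ i : Fin n, min (∑ j, A i j) (∑ j, Abar i j)) ^ 4 *
          (specNorm A + specNorm Abar) * specNorm (A - Abar) := by
  rcases Nat.eq_zero_or_pos n with hn | hn
  · subst hn
    simp [frobNorm]
  haveI : NeZero n := ⟨hn.ne'⟩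
  set d : Fin n → ℝ := fun i => ∑ j, A i j with hdd
  set db : Fin n → ℝ := fun i => ∑ j, Abar i j with hdbd
  set d0 : ℝ := ⨅ i : Fin n, min (d i) (db i) with hd0
  have hbdd : BddBelow (Set.range fun i : Fin n => min (d i) (db i)) :=
    (Set.finite_range _).bddBelow
  have hd0le : ∀ i, d0 ≤ min (d i) (db i) := fun i => ciInf_le hbdd i
  have hd0pos : 0 < d0 := by
    obtain ⟨i0, hi0⟩ := exists_eq_ciInf_of_finite (f := fun i : Fin n => min (d i) (db i))
    rw [hd0, ← hi0]
    exact lt_min (hd i0) (hdbar i0)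
  have hd0d : ∀ i, d0 ≤ d i := fun i => (hd0le i).trans (min_le_left _ _)
  have hd0db : ∀ i, d0 ≤ db i := fun i => (hd0le i).trans (min_le_right _ _)
  -- entries of the matrix
  set X : Fin n → Fin n → ℝ := fun i j =>
    Abar i j * ((db i - d i) * db j) / (d i * d j * db i * db j) with hX
  set Y : Fin n → Fin n → ℝ := fun i j =>
    Abar i j * (d i * (db j - d j)) / (d i * d j * db i * db j) with hY
  have hentry : ∀ i j,
      ((Matrix.diagonal fun i => (d i)⁻¹) * Abar * (Matrix.diagonal fun i => (d i)⁻¹) -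
        (Matrix.diagonal fun i => (db i)⁻¹) * Abar * (Matrix.diagonal fun i => (db i)⁻¹)) i j
      = X i j + Y i j := by
    intro i j
    have hdi : d i ≠ 0 := (hd i).ne'
    have hdj : d j ≠ 0 := (hd j).ne'
    have hdbi : db i ≠ 0 := (hdbar i).ne'
    have hdbj : db j ≠ 0 := (hdbar j).ne'
    rw [Matrix.sub_apply, Matrix.mul_diagonal, Matrix.diagonal_mul,
      Matrix.mul_diagonal, Matrix.diagonal_mul, hX, hY]
    simp only
    field_simp
    ring
  -- spectral norms
  set sA : ℝ := specNorm A with hsA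
  set sB : ℝ := specNorm Abar with hsB
  set sE : ℝ := specNorm (A - Abar) with hsE
  have hsA0 : 0 ≤ sA := norm_nonneg _
  have hsB0 : 0 ≤ sB := norm_nonneg _
  have hsE0 : 0 ≤ sE := norm_nonneg _
  -- row sum bounds
  have hsumd : ∑ i, (d i) ^ 2 ≤ (n : ℝ) * sA ^ 2 := rowsum_sq_le A
  have hsumdb : ∑ i, (db i) ^ 2 ≤ (n : ℝ) * sB ^ 2 := rowsum_sq_le Abar
  have hsumdelta : ∑ i, (db i - d i) ^ 2 ≤ (n : ℝ) * sE ^ 2 := by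
    have h := rowsum_sq_le (A - Abar)
    have : ∀ i, (db i - d i) ^ 2 = (∑ j, (A - Abar) i j) ^ 2 := by
      intro i
      have : ∑ j, (A - Abar) i j = d i - db i := by
        simp [Matrix.sub_apply, Finset.sum_sub_distrib, hdd, hdbd]
      rw [this]; ring
    rw [Finset.sum_congr rfl fun i _ => this i]
    exact h
  -- pointwise bounds
  have hXb : ∀ p : Fin n × Fin n, |X p.1 p.2| ≤ |db p.1 - d p.1| * db p.2 / d0 ^ 4 := by
    rintro ⟨i, j⟩
    have hP : d0 ^ 4 ≤ d i * d j * db i * db j :=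
      pow4_le_prod hd0pos (hd0d i) (hd0d j) (hd0db i) (hd0db j)
    have hPpos : (0:ℝ) < d i * d j * db i * db j :=
      mul_pos (mul_pos (mul_pos (hd i) (hd j)) (hdbar i)) (hdbar j)
    have habs : |X i j| = Abar i j * (|db i - d i| * db j) / (d i * d j * db i * db j) := by
      rw [hX]; simp only
      rw [abs_div, abs_of_pos hPpos,
        abs_mul, abs_of_nonneg (hAbar i j).1, abs_mul, abs_of_pos (hdbar j)]
    rw [habs]
    have hnum0 : (0:ℝ) ≤ |db i - d i| * db j := mul_nonneg (abs_nonneg _) (hdbar j).le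
    apply div_le_div₀ hnum0 _ (by positivity) hP
    calc Abar i j * (|db i - d i| * db j) ≤ 1 * (|db i - d i| * db j) :=
          mul_le_mul_of_nonneg_right (hAbar i j).2 hnum0
      _ = |db i - d i| * db j := by ring
  have hYb : ∀ p : Fin n × Fin n, |Y p.1 p.2| ≤ d p.1 * |db p.2 - d p.2| / d0 ^ 4 := by
    rintro ⟨i, j⟩
    have hP : d0 ^ 4 ≤ d i * d j * db i * db j :=
      pow4_le_prod hd0pos (hd0d i) (hd0d j) (hd0db i) (hd0db j)
    have hPpos : (0:ℝ) < d i * d j * db i * db j :=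
      mul_pos (mul_pos (mul_pos (hd i) (hd j)) (hdbar i)) (hdbar j)
    have habs : |Y i j| = Abar i j * (d i * |db j - d j|) / (d i * d j * db i * db j) := by
      rw [hY]; simp only
      rw [abs_div, abs_of_pos hPpos,
        abs_mul, abs_of_nonneg (hAbar i j).1, abs_mul, abs_of_pos (hd i)]
    rw [habs]
    have hnum0 : (0:ℝ) ≤ d i * |db j - d j| := mul_nonneg (hd i).le (abs_nonneg _)
    apply div_le_div₀ hnum0 _ (by positivity) hP
    calc Abar i j * (d i * |db j - d j|) ≤ 1 * (d i * |db j - d j|) :=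
          mul_le_mul_of_nonneg_right (hAbar i j).2 hnum0
      _ = d i * |db j - d j| := by ring
  -- sum bounds for X and Y parts
  have hXsum : Real.sqrt (∑ p : Fin n × Fin n, (X p.1 p.2) ^ 2)
      ≤ (n : ℝ) * sE * sB / d0 ^ 4 := by
    refine (sqrt_sum_mono (b := fun p => |db p.1 - d p.1| * db p.2 / d0 ^ 4) hXb).trans ?_
    apply sqrt_le_of_sq_le
      (div_nonneg (mul_nonneg (mul_nonneg (Nat.cast_nonneg n) hsE0) hsB0)
        (pow_nonneg hd0pos.le 4))
    have h1 : ∑ p : Fin n × Fin n, (|db p.1 - d p.1| * db p.2 / d0 ^ 4) ^ 2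
        = (∑ i, (db i - d i) ^ 2) * (∑ j, (db j) ^ 2) / (d0 ^ 4) ^ 2 := by
      rw [Finset.sum_congr rfl (fun (p : Fin n × Fin n) _ => by
        rw [div_pow, mul_pow, sq_abs] :
          ∀ p ∈ (Finset.univ : Finset (Fin n × Fin n)), (|db p.1 - d p.1| * db p.2 / d0 ^ 4) ^ 2
            = (db p.1 - d p.1) ^ 2 * (db p.2) ^ 2 / (d0 ^ 4) ^ 2),
        ← Finset.sum_div, Finset.sum_mul_sum, Fintype.sum_prod_type]
    rw [h1]
    have h2 : (∑ i, (db i - d i) ^ 2) * (∑ j, (db j) ^ 2)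
        ≤ ((n : ℝ) * sE ^ 2) * ((n : ℝ) * sB ^ 2) :=
      mul_le_mul hsumdelta hsumdb (Finset.sum_nonneg fun i _ => sq_nonneg _)
        (mul_nonneg (Nat.cast_nonneg n) (sq_nonneg _))
    calc (∑ i, (db i - d i) ^ 2) * (∑ j, (db j) ^ 2) / (d0 ^ 4) ^ 2
        ≤ ((n : ℝ) * sE ^ 2) * ((n : ℝ) * sB ^ 2) / (d0 ^ 4) ^ 2 :=
          div_le_div_of_nonneg_right h2 (by positivity)
      _ = ((n : ℝ) * sE * sB / d0 ^ 4) ^ 2 := by ring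
  have hYsum : Real.sqrt (∑ p : Fin n × Fin n, (Y p.1 p.2) ^ 2)
      ≤ (n : ℝ) * sA * sE / d0 ^ 4 := by
    refine (sqrt_sum_mono (b := fun p => d p.1 * |db p.2 - d p.2| / d0 ^ 4) hYb).trans ?_
    apply sqrt_le_of_sq_le
      (div_nonneg (mul_nonneg (mul_nonneg (Nat.cast_nonneg n) hsA0) hsE0)
        (pow_nonneg hd0pos.le 4))
    have h1 : ∑ p : Fin n × Fin n, (d p.1 * |db p.2 - d p.2| / d0 ^ 4) ^ 2
        = (∑ i, (d i) ^ 2) * (∑ j, (db j - d j) ^ 2) / (d0 ^ 4) ^ 2 := by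
      rw [Finset.sum_congr rfl (fun (p : Fin n × Fin n) _ => by
        rw [div_pow, mul_pow, sq_abs] :
          ∀ p ∈ (Finset.univ : Finset (Fin n × Fin n)), (d p.1 * |db p.2 - d p.2| / d0 ^ 4) ^ 2
            = (d p.1) ^ 2 * (db p.2 - d p.2) ^ 2 / (d0 ^ 4) ^ 2),
        ← Finset.sum_div, Finset.sum_mul_sum, Fintype.sum_prod_type]
    rw [h1]
    have h2 : (∑ i, (d i) ^ 2) * (∑ j, (db j - d j) ^ 2)
        ≤ ((n : ℝ) * sA ^ 2) * ((n : ℝ) * sE ^ 2) :=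
      mul_le_mul hsumd hsumdelta (Finset.sum_nonneg fun i _ => sq_nonneg _)
        (mul_nonneg (Nat.cast_nonneg n) (sq_nonneg _))
    calc (∑ i, (d i) ^ 2) * (∑ j, (db j - d j) ^ 2) / (d0 ^ 4) ^ 2
        ≤ ((n : ℝ) * sA ^ 2) * ((n : ℝ) * sE ^ 2) / (d0 ^ 4) ^ 2 :=
          div_le_div_of_nonneg_right h2 (by positivity)
      _ = ((n : ℝ) * sA * sE / d0 ^ 4) ^ 2 := by ring
  -- assemble
  have hfrob : frobNorm
      ((Matrix.diagonal fun i => (d i)⁻¹) * Abar * (Matrix.diagonal fun i => (d i)⁻¹) -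
        (Matrix.diagonal fun i => (db i)⁻¹) * Abar * (Matrix.diagonal fun i => (db i)⁻¹))
      = Real.sqrt (∑ p : Fin n × Fin n, (X p.1 p.2 + Y p.1 p.2) ^ 2) := by
    rw [frobNorm, Fintype.sum_prod_type]
    congr 1
    exact Finset.sum_congr rfl fun i _ => Finset.sum_congr rfl fun j _ => by rw [hentry i j]
  calc frobNorm _ = Real.sqrt (∑ p : Fin n × Fin n, (X p.1 p.2 + Y p.1 p.2) ^ 2) := hfrob
    _ ≤ Real.sqrt (∑ p : Fin n × Fin n, (X p.1 p.2) ^ 2)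
        + Real.sqrt (∑ p : Fin n × Fin n, (Y p.1 p.2) ^ 2) :=
      sqrt_sum_sq_tri _ _
    _ ≤ (n : ℝ) * sE * sB / d0 ^ 4 + (n : ℝ) * sA * sE / d0 ^ 4 := add_le_add hXsum hYsum
    _ = (n : ℝ) / d0 ^ 4 * (sA + sB) * sE := by
      field_simp
      ring
end

section
/- Let A, Ā ∈ ℝ^{n×n} with all entries of both A and Ā lying in [0,1]. Let d_i = Σ_j A_{ij} and d̄_i = Σ_j Ā_{ij} be the row sums, assume they are all positive, let D and D̄ be the diagonal matrices of the d_i and d̄_i respectively, and set d₀ = min_i min{d_i, d̄_i}. Then ‖D⁻¹ Ā D⁻¹ − D̄⁻¹ Ā D̄⁻¹‖_∞ ≤ (n²/d₀⁴)·(‖A − Ā‖₂ + ‖A − Ā‖_∞). -/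
open scoped BigOperators

/-- Maximum absolute row-sum norm of a real matrix. -/
noncomputable def rowSumNorm {m n : ℕ} (M : Matrix (Fin m) (Fin n) ℝ) : ℝ :=
  ⨆ i, ∑ j, |M i j|

/-- With `d_i, d̄_i` the (positive) row sums of `A, Ā`, `D, D̄` the corresponding diagonal degree
matrices, `d₀ = min_i min{d_i, d̄_i}`, and all entries of `A` and `Ā` in `[0,1]`, it holds
`‖D⁻¹ Ā D⁻¹ − D̄⁻¹ Ā D̄⁻¹‖_∞ ≤ (n²/d₀⁴)·(‖A − Ā‖₂ + ‖A − Ā‖_∞)`. -/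
theorem normalized_adjacency_rowsum_bound {n : ℕ} (A Abar : Matrix (Fin n) (Fin n) ℝ)
    (hA : ∀ i j, 0 ≤ A i j ∧ A i j ≤ 1)
    (hAbar : ∀ i j, 0 ≤ Abar i j ∧ Abar i j ≤ 1)
    (hd : ∀ i, 0 < ∑ j, A i j) (hdbar : ∀ i, 0 < ∑ j, Abar i j) :
    rowSumNorm
        ((Matrix.diagonal fun i => (∑ j, A i j)⁻¹) * Abar *
            (Matrix.diagonal fun i => (∑ j, A i j)⁻¹) -
          (Matrix.diagonal fun i => (∑ j, Abar i j)⁻¹) * Abar *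
            (Matrix.diagonal fun i => (∑ j, Abar i j)⁻¹))
      ≤ (n : ℝ) ^ 2 / (⨅ i : Fin n, min (∑ j, A i j) (∑ j, Abar i j)) ^ 4 *
          (specNorm (A - Abar) + rowSumNorm (A - Abar)) := by
  rcases Nat.eq_zero_or_pos n with h0 | hn
  · subst h0
    simp [rowSumNorm]
  haveI : Nonempty (Fin n) := Fin.pos_iff_nonempty.mp hn
  set d : Fin n → ℝ := fun i => ∑ j, A i j with hd_def
  set e : Fin n → ℝ := fun i => ∑ j, Abar i j with he_def
  set d0 : ℝ := ⨅ i : Fin n, min (d i) (e i) with hd0_def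
  set δ2 : ℝ := specNorm (A - Abar) with hδ2_def
  set δI : ℝ := rowSumNorm (A - Abar) with hδI_def
  have hbdd : BddBelow (Set.range fun i => min (d i) (e i)) := (Set.finite_range _).bddBelow
  have hd0_le_d : ∀ i, d0 ≤ d i := fun i => (ciInf_le hbdd i).trans (min_le_left _ _)
  have hd0_le_e : ∀ i, d0 ≤ e i := fun i => (ciInf_le hbdd i).trans (min_le_right _ _)
  have hd0_pos : 0 < d0 := by
    obtain ⟨i0, hi0⟩ := Finite.exists_min (fun i => min (d i) (e i))
    exact lt_of_lt_of_le (lt_min (hd i0) (hdbar i0)) (le_ciInf hi0)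
  have hd0_le_n : d0 ≤ n := by
    obtain ⟨i0⟩ := (inferInstance : Nonempty (Fin n))
    refine (hd0_le_d i0).trans ?_
    calc d i0 = ∑ j, A i0 j := rfl
      _ ≤ ∑ _j : Fin n, (1 : ℝ) := Finset.sum_le_sum fun j _ => (hA i0 j).2
      _ = n := by simp
  have hrow : ∀ i, ∑ j, |(A - Abar) i j| ≤ δI := by
    intro i
    rw [hδI_def, rowSumNorm]
    exact le_ciSup (f := fun i => ∑ j, |(A - Abar) i j|) (Set.finite_range _).bddAbove i
  have hδI_nonneg : 0 ≤ δI := by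
    obtain ⟨i0⟩ := (inferInstance : Nonempty (Fin n))
    exact le_trans (Finset.sum_nonneg fun j _ => abs_nonneg _) (hrow i0)
  have hδ2_nonneg : 0 ≤ δ2 := norm_nonneg _
  have hde : ∀ i, |d i - e i| ≤ δI := by
    intro i
    have : d i - e i = ∑ j, (A - Abar) i j := by
      simp [hd_def, he_def, Matrix.sub_apply, Finset.sum_sub_distrib]
    rw [this]
    exact (Finset.abs_sum_le_sum_abs _ _).trans (hrow i)
  -- Cauchy–Schwarz bound on the ℓ¹ norm of the degree differences
  have hsum_de : ∑ j, |d j - e j| ≤ n * δ2 := by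
    set M := A - Abar with hM
    set v : EuclideanSpace ℝ (Fin n) :=
      (WithLp.equiv 2 (Fin n → ℝ)).symm (M.mulVec (fun _ => (1 : ℝ))) with hv_def
    have hvj : ∀ j, v j = d j - e j := by
      intro j
      simp [hv_def, WithLp.equiv_symm_apply, PiLp.toLp_apply, Matrix.mulVec, dotProduct, hM,
        Matrix.sub_apply, Finset.sum_sub_distrib, hd_def, he_def]
    have hv : Matrix.toEuclideanLin M ((WithLp.equiv 2 (Fin n → ℝ)).symm fun _ => (1 : ℝ)) = v :=
      Matrix.toEuclideanLin_apply_piLp_toLp M _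
    have hnorm_u : ‖(WithLp.equiv 2 (Fin n → ℝ)).symm fun _ => (1 : ℝ)‖ = Real.sqrt n := by
      simp [EuclideanSpace.norm_eq, WithLp.equiv_symm_apply, PiLp.toLp_apply]
    have hv_norm : ‖v‖ ≤ δ2 * Real.sqrt n := by
      rw [← hv, ← hnorm_u]
      exact (LinearMap.toContinuousLinearMap (Matrix.toEuclideanLin M)).le_opNorm _
    have hnv : ‖v‖ ^ 2 = ∑ j, (d j - e j) ^ 2 := by
      rw [EuclideanSpace.norm_eq, Real.sq_sqrt (Finset.sum_nonneg fun j _ => sq_nonneg _)]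
      simp [hvj, Real.norm_eq_abs, sq_abs]
    have h1 : (∑ j, |d j - e j|) ^ 2 ≤ (n : ℝ) * ∑ j, (d j - e j) ^ 2 := by
      have := sq_sum_le_card_mul_sum_sq (s := Finset.univ) (f := fun j => |d j - e j|)
      simpa [sq_abs] using this
    have h2 : ‖v‖ ^ 2 ≤ (δ2 * Real.sqrt n) ^ 2 := by
      have := mul_self_le_mul_self (norm_nonneg v) hv_norm
      simpa [sq] using this
    have h3 : (δ2 * Real.sqrt n) ^ 2 = δ2 ^ 2 * n := by
      rw [mul_pow, Real.sq_sqrt (by positivity)]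
    have h4 : (∑ j, |d j - e j|) ^ 2 ≤ ((n : ℝ) * δ2) ^ 2 := by
      calc (∑ j, |d j - e j|) ^ 2 ≤ (n : ℝ) * ∑ j, (d j - e j) ^ 2 := h1
        _ = (n : ℝ) * ‖v‖ ^ 2 := by rw [hnv]
        _ ≤ (n : ℝ) * (δ2 ^ 2 * n) := by
            refine mul_le_mul_of_nonneg_left ?_ (by positivity)
            rw [← h3]; exact h2
        _ = ((n : ℝ) * δ2) ^ 2 := by ring
    have hs_nonneg : 0 ≤ ∑ j, |d j - e j| := Finset.sum_nonneg fun j _ => abs_nonneg _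
    nlinarith [hs_nonneg, mul_nonneg (Nat.cast_nonneg (α := ℝ) n) hδ2_nonneg]
  -- pointwise bound on inverse differences
  have hinv_le : ∀ i, (d i)⁻¹ ≤ d0⁻¹ := fun i => inv_anti₀ hd0_pos (hd0_le_d i)
  have hinv_le' : ∀ i, (e i)⁻¹ ≤ d0⁻¹ := fun i => inv_anti₀ hd0_pos (hd0_le_e i)
  have hinv_pos : ∀ i, 0 ≤ (d i)⁻¹ := fun i => le_of_lt (inv_pos.mpr (hd i))
  have hinv_pos' : ∀ i, 0 ≤ (e i)⁻¹ := fun i => le_of_lt (inv_pos.mpr (hdbar i))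
  have hinvdiff : ∀ j, |(d j)⁻¹ - (e j)⁻¹| ≤ d0⁻¹ * d0⁻¹ * |d j - e j| := by
    intro j
    have hdj := hd j; have hej := hdbar j
    have heq : (d j)⁻¹ - (e j)⁻¹ = (e j - d j) * (d j)⁻¹ * (e j)⁻¹ := by
      have hdj' : d j ≠ 0 := ne_of_gt hdj
      have hej' : e j ≠ 0 := ne_of_gt hej
      rw [inv_sub_inv hdj' hej']; ring
    rw [heq, abs_mul, abs_mul, abs_sub_comm]
    rw [abs_of_nonneg (hinv_pos j), abs_of_nonneg (hinv_pos' j)]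
    calc |d j - e j| * (d j)⁻¹ * (e j)⁻¹ ≤ |d j - e j| * d0⁻¹ * d0⁻¹ := by
          have h1 : (d j)⁻¹ ≤ d0⁻¹ := hinv_le j
          have h2 : (e j)⁻¹ ≤ d0⁻¹ := hinv_le' j
          exact mul_le_mul (mul_le_mul le_rfl h1 (hinv_pos j) (abs_nonneg _)) h2
            (hinv_pos' j) (by positivity)
      _ = d0⁻¹ * d0⁻¹ * |d j - e j| := by ring
  -- entrywise bound
  have key : ∀ i j,
      |((Matrix.diagonal fun i => (d i)⁻¹) * Abar * (Matrix.diagonal fun i => (d i)⁻¹) -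
        (Matrix.diagonal fun i => (e i)⁻¹) * Abar * (Matrix.diagonal fun i => (e i)⁻¹)) i j|
      ≤ d0⁻¹ * (d0⁻¹ * d0⁻¹) * δI + d0⁻¹ * (d0⁻¹ * d0⁻¹) * |d j - e j| := by
    intro i j
    have hentry : ((Matrix.diagonal fun i => (d i)⁻¹) * Abar * (Matrix.diagonal fun i => (d i)⁻¹) -
        (Matrix.diagonal fun i => (e i)⁻¹) * Abar * (Matrix.diagonal fun i => (e i)⁻¹)) i j
        = (d i)⁻¹ * Abar i j * (d j)⁻¹ - (e i)⁻¹ * Abar i j * (e j)⁻¹ := by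
      simp [Matrix.sub_apply, Matrix.mul_diagonal, Matrix.diagonal_mul]
    rw [hentry]
    have hsplit : (d i)⁻¹ * Abar i j * (d j)⁻¹ - (e i)⁻¹ * Abar i j * (e j)⁻¹
        = Abar i j * ((d j)⁻¹ * ((d i)⁻¹ - (e i)⁻¹)) +
          Abar i j * ((e i)⁻¹ * ((d j)⁻¹ - (e j)⁻¹)) := by ring
    rw [hsplit]
    refine (abs_add_le _ _).trans ?_
    have hAij0 := (hAbar i j).1
    have hAij1 := (hAbar i j).2
    have hdiffI : |(d i)⁻¹ - (e i)⁻¹| ≤ d0⁻¹ * d0⁻¹ * δI :=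
      (hinvdiff i).trans (mul_le_mul_of_nonneg_left (hde i) (by positivity))
    have t1 : |Abar i j * ((d j)⁻¹ * ((d i)⁻¹ - (e i)⁻¹))| ≤ d0⁻¹ * (d0⁻¹ * d0⁻¹) * δI := by
      rw [abs_mul, abs_mul, abs_of_nonneg hAij0, abs_of_nonneg (hinv_pos j)]
      calc Abar i j * ((d j)⁻¹ * |(d i)⁻¹ - (e i)⁻¹|)
          ≤ 1 * (d0⁻¹ * (d0⁻¹ * d0⁻¹ * δI)) := by
            refine mul_le_mul hAij1 (mul_le_mul (hinv_le j) hdiffI (abs_nonneg _)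
              (by positivity)) ?_ one_pos.le
            exact mul_nonneg (hinv_pos j) (abs_nonneg _)
        _ = d0⁻¹ * (d0⁻¹ * d0⁻¹) * δI := by ring
    have t2 : |Abar i j * ((e i)⁻¹ * ((d j)⁻¹ - (e j)⁻¹))| ≤
        d0⁻¹ * (d0⁻¹ * d0⁻¹) * |d j - e j| := by
      rw [abs_mul, abs_mul, abs_of_nonneg hAij0, abs_of_nonneg (hinv_pos' i)]
      calc Abar i j * ((e i)⁻¹ * |(d j)⁻¹ - (e j)⁻¹|)
          ≤ 1 * (d0⁻¹ * (d0⁻¹ * d0⁻¹ * |d j - e j|)) := by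
            refine mul_le_mul hAij1 (mul_le_mul (hinv_le' i) (hinvdiff j) (abs_nonneg _)
              (by positivity)) ?_ one_pos.le
            exact mul_nonneg (hinv_pos' i) (abs_nonneg _)
        _ = d0⁻¹ * (d0⁻¹ * d0⁻¹) * |d j - e j| := by ring
    linarith
  -- sum the entrywise bound over rows
  have hrowbound : ∀ i,
      ∑ j, |((Matrix.diagonal fun i => (d i)⁻¹) * Abar * (Matrix.diagonal fun i => (d i)⁻¹) -
        (Matrix.diagonal fun i => (e i)⁻¹) * Abar * (Matrix.diagonal fun i => (e i)⁻¹)) i j|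
      ≤ (n : ℝ) * (d0⁻¹ * (d0⁻¹ * d0⁻¹) * δI) + d0⁻¹ * (d0⁻¹ * d0⁻¹) * ((n : ℝ) * δ2) := by
    intro i
    calc ∑ j, |((Matrix.diagonal fun i => (d i)⁻¹) * Abar * (Matrix.diagonal fun i => (d i)⁻¹) -
          (Matrix.diagonal fun i => (e i)⁻¹) * Abar * (Matrix.diagonal fun i => (e i)⁻¹)) i j|
        ≤ ∑ j, (d0⁻¹ * (d0⁻¹ * d0⁻¹) * δI + d0⁻¹ * (d0⁻¹ * d0⁻¹) * |d j - e j|) :=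
          Finset.sum_le_sum fun j _ => key i j
      _ = (n : ℝ) * (d0⁻¹ * (d0⁻¹ * d0⁻¹) * δI) +
            d0⁻¹ * (d0⁻¹ * d0⁻¹) * ∑ j, |d j - e j| := by
          rw [Finset.sum_add_distrib, Finset.sum_const, ← Finset.mul_sum]
          simp [mul_comm]
      _ ≤ (n : ℝ) * (d0⁻¹ * (d0⁻¹ * d0⁻¹) * δI) + d0⁻¹ * (d0⁻¹ * d0⁻¹) * ((n : ℝ) * δ2) := by
          have := mul_le_mul_of_nonneg_left hsum_de
            (le_of_lt (show (0:ℝ) < d0⁻¹ * (d0⁻¹ * d0⁻¹) by positivity))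
          linarith
  -- conclude
  have hfinal : (n : ℝ) * (d0⁻¹ * (d0⁻¹ * d0⁻¹) * δI) + d0⁻¹ * (d0⁻¹ * d0⁻¹) * ((n : ℝ) * δ2)
      ≤ (n : ℝ) ^ 2 / d0 ^ 4 * (δ2 + δI) := by
    rw [div_mul_eq_mul_div, le_div_iff₀ (by positivity)]
    have hne : d0 ≠ 0 := ne_of_gt hd0_pos
    have hrw : ((n : ℝ) * (d0⁻¹ * (d0⁻¹ * d0⁻¹) * δI) + d0⁻¹ * (d0⁻¹ * d0⁻¹) * ((n : ℝ) * δ2))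
        * d0 ^ 4 = (n : ℝ) * δI * d0 + (n : ℝ) * δ2 * d0 := by
      field_simp
    rw [hrw]
    have hnn : (0 : ℝ) ≤ n := Nat.cast_nonneg n
    nlinarith [mul_le_mul_of_nonneg_left hd0_le_n (mul_nonneg hnn hδI_nonneg),
      mul_le_mul_of_nonneg_left hd0_le_n (mul_nonneg hnn hδ2_nonneg)]
  refine ciSup_le fun i => ?_
  exact (hrowbound i).trans hfinal
end

section
/- Let G ∈ ℝ^{d×d} be symmetric positive definite, let H₁,…,H_k ∈ ℝ^{d×d} be symmetric, set S_α = G^{−1/2} H_α G^{−1/2}, let κ = κ(S₁,…,S_k), and fix ε > 0 and r > 0. Then the block-diagonal matrix M(n) = diag( G^{1/2}(I_d − ε Σ_α n^α S_α)² G^{1/2}, ε² I_k ) is positive definite for every n ∈ ℝ^k with ‖n‖₂ ≤ r if and only if ε·r·κ < 1. -/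
open scoped BigOperators

/-- The positive semidefinite square root of a positive semidefinite matrix (the definition
`Matrix.PosSemidef.sqrt` of the older Mathlib, removed since). -/
noncomputable def Matrix.PosSemidef.sqrt {n : Type*} [Fintype n] [DecidableEq n]
    {A : Matrix n n ℝ} (hA : A.PosSemidef) : Matrix n n ℝ :=
  (hA.1.eigenvectorUnitary : Matrix n n ℝ) *
    Matrix.diagonal (Real.sqrt ∘ hA.1.eigenvalues) *
    (star hA.1.eigenvectorUnitary : Matrix n n ℝ)

/-- For symmetric matrices `S₁,…,S_k ∈ ℝ^{d×d}`,
`κ(S₁,…,S_k) = max_{‖v‖₂=1} (Σ_α (vᵀ S_α v)²)^{1/2}`. -/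
noncomputable def kappa {d k : ℕ} (S : Fin k → Matrix (Fin d) (Fin d) ℝ) : ℝ :=
  ⨆ v : {v : Fin d → ℝ // ∑ i, v i ^ 2 = 1},
    Real.sqrt (∑ α, (dotProduct v.1 ((S α).mulVec v.1)) ^ 2)

/-- `S_α = G^{−1/2} H_α G^{−1/2}`, where `G^{1/2}` is the positive (semi)definite square root of
the positive definite matrix `G`. -/
noncomputable def Smat {d k : ℕ} (G : Matrix (Fin d) (Fin d) ℝ) (hG : G.PosDef)
    (H : Fin k → Matrix (Fin d) (Fin d) ℝ) (α : Fin k) : Matrix (Fin d) (Fin d) ℝ :=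
  hG.posSemidef.sqrt⁻¹ * H α * hG.posSemidef.sqrt⁻¹

/-- The `(d+k)×(d+k)` block-diagonal matrix
`M(n) = diag( G^{1/2}(I_d − ε Σ_α n^α S_α)² G^{1/2}, ε² I_k )`. -/
noncomputable def blockM {d k : ℕ} (G : Matrix (Fin d) (Fin d) ℝ) (hG : G.PosDef)
    (H : Fin k → Matrix (Fin d) (Fin d) ℝ) (ε : ℝ) (nv : Fin k → ℝ) :
    Matrix (Fin d ⊕ Fin k) (Fin d ⊕ Fin k) ℝ :=
  Matrix.fromBlocks
    (hG.posSemidef.sqrt *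
        ((1 : Matrix (Fin d) (Fin d) ℝ) - ε • ∑ α, nv α • Smat G hG H α) ^ 2 *
      hG.posSemidef.sqrt)
    0 0 (ε ^ 2 • (1 : Matrix (Fin k) (Fin k) ℝ))

theorem Matrix.PosSemidef.sqrt_isHermitian_aux {n : Type*} [Fintype n] [DecidableEq n]
    {A : Matrix n n ℝ} (hA : A.PosSemidef) : hA.sqrt.IsHermitian := by
  unfold Matrix.PosSemidef.sqrt
  simp only [Matrix.IsHermitian, Matrix.conjTranspose_mul, Matrix.diagonal_conjTranspose,
    Matrix.star_eq_conjTranspose, Matrix.conjTranspose_conjTranspose, Matrix.mul_assoc, star_trivial]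

theorem Matrix.PosSemidef.sqrt_mul_self_aux {n : Type*} [Fintype n] [DecidableEq n]
    {A : Matrix n n ℝ} (hA : A.PosSemidef) : hA.sqrt * hA.sqrt = A := by
  unfold Matrix.PosSemidef.sqrt
  have hU : (star hA.1.eigenvectorUnitary : Matrix n n ℝ) * (hA.1.eigenvectorUnitary : Matrix n n ℝ) = 1 :=
    Matrix.UnitaryGroup.star_mul_self _
  have key : ∀ U D S : Matrix n n ℝ, S * U = 1 → U * D * S * (U * D * S) = U * (D * D) * S := by
    intro U D S h
    simp only [Matrix.mul_assoc]
    rw [← Matrix.mul_assoc S U, h, Matrix.one_mul]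
  rw [key _ _ _ hU, Matrix.diagonal_mul_diagonal]
  conv_rhs => rw [hA.1.spectral_theorem, Unitary.conjStarAlgAut_apply]
  congr 3
  funext i
  simp [Real.mul_self_sqrt (hA.eigenvalues_nonneg i)]

section AuxLemmas

open Matrix

variable {d k : ℕ}

private lemma sum_smul_mulVec (c : Fin k → ℝ) (S : Fin k → Matrix (Fin d) (Fin d) ℝ)
    (x : Fin d → ℝ) : (∑ α, c α • S α) *ᵥ x = ∑ α, c α • (S α *ᵥ x) := by
  let f : Matrix (Fin d) (Fin d) ℝ →+ (Fin d → ℝ) :=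
    AddMonoidHom.mk' (fun M => M *ᵥ x) (fun A B => Matrix.add_mulVec A B x)
  have : (∑ α, c α • S α) *ᵥ x = f (∑ α, c α • S α) := rfl
  rw [this, map_sum]
  refine Finset.sum_congr rfl fun α _ => ?_
  show (c α • S α) *ᵥ x = c α • (S α *ᵥ x)
  exact Matrix.smul_mulVec _ _ _

private lemma dot_sum_smul (c : Fin k → ℝ) (S : Fin k → Matrix (Fin d) (Fin d) ℝ)
    (x : Fin d → ℝ) :
    x ⬝ᵥ ((∑ α, c α • S α) *ᵥ x) = ∑ α, c α * (x ⬝ᵥ (S α *ᵥ x)) := by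
  rw [sum_smul_mulVec]
  simp only [dotProduct, Finset.sum_apply, Pi.smul_apply, smul_eq_mul, Finset.mul_sum]
  rw [Finset.sum_comm]
  refine Finset.sum_congr rfl fun α _ => Finset.sum_congr rfl fun i _ => by ring

private lemma dot_mulVec_symm {P : Matrix (Fin d) (Fin d) ℝ} (hP : P.IsHermitian)
    (x y : Fin d → ℝ) : x ⬝ᵥ (P *ᵥ y) = (P *ᵥ x) ⬝ᵥ y := by
  have hPt : Pᵀ = P := by
    rw [← Matrix.conjTranspose_eq_transpose_of_trivial]; exact hP.eq
  rw [Matrix.dotProduct_mulVec, ← Matrix.mulVec_transpose, hPt]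

private lemma dot_PQsqP {P Q : Matrix (Fin d) (Fin d) ℝ} (hP : P.IsHermitian)
    (hQ : Q.IsHermitian) (x : Fin d → ℝ) :
    x ⬝ᵥ ((P * Q ^ 2 * P) *ᵥ x) = (Q *ᵥ (P *ᵥ x)) ⬝ᵥ (Q *ᵥ (P *ᵥ x)) := by
  have h : (P * Q ^ 2 * P) *ᵥ x = P *ᵥ (Q *ᵥ (Q *ᵥ (P *ᵥ x))) := by
    simp only [Matrix.mulVec_mulVec, pow_two, Matrix.mul_assoc]
  rw [h, dot_mulVec_symm hP, dot_mulVec_symm hQ]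

private lemma dot_fromBlocks (T : Matrix (Fin d) (Fin d) ℝ) (D : Matrix (Fin k) (Fin k) ℝ)
    (x : Fin d ⊕ Fin k → ℝ) :
    x ⬝ᵥ ((Matrix.fromBlocks T 0 0 D) *ᵥ x)
      = (x ∘ Sum.inl) ⬝ᵥ (T *ᵥ (x ∘ Sum.inl)) + (x ∘ Sum.inr) ⬝ᵥ (D *ᵥ (x ∘ Sum.inr)) := by
  rw [Matrix.fromBlocks_mulVec]
  nth_rewrite 1 [← Sum.elim_comp_inl_inr x]
  rw [sumElim_dotProduct_sumElim]
  simp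

private lemma abs_le_one_of_unit {v : Fin d → ℝ} (hv : ∑ i, v i ^ 2 = 1) (i : Fin d) :
    |v i| ≤ 1 := by
  have h1 : v i ^ 2 ≤ 1 := by
    rw [← hv]
    exact Finset.single_le_sum (f := fun j => v j ^ 2) (fun j _ => sq_nonneg _)
      (Finset.mem_univ i)
  exact (sq_le_one_iff_abs_le_one (v i)).mp h1

private lemma kappa_bddAbove (S : Fin k → Matrix (Fin d) (Fin d) ℝ) :
    BddAbove (Set.range fun v : {v : Fin d → ℝ // ∑ i, v i ^ 2 = 1} =>
      Real.sqrt (∑ α, (dotProduct v.1 ((S α).mulVec v.1)) ^ 2)) := by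
  refine ⟨Real.sqrt (∑ α, (∑ i, ∑ j, |S α i j|) ^ 2), ?_⟩
  rintro y ⟨⟨v, hv⟩, rfl⟩
  dsimp only
  apply Real.sqrt_le_sqrt
  refine Finset.sum_le_sum fun α _ => ?_
  have habs : |dotProduct v ((S α).mulVec v)| ≤ ∑ i, ∑ j, |S α i j| := by
    simp only [dotProduct, Matrix.mulVec]
    refine (Finset.abs_sum_le_sum_abs _ _).trans (Finset.sum_le_sum fun i _ => ?_)
    rw [abs_mul]
    calc |v i| * |∑ j, S α i j * v j| ≤ 1 * ∑ j, |S α i j| := by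
          refine mul_le_mul (abs_le_one_of_unit hv i) ?_ (abs_nonneg _) zero_le_one
          refine (Finset.abs_sum_le_sum_abs _ _).trans (Finset.sum_le_sum fun j _ => ?_)
          rw [abs_mul]
          exact mul_le_of_le_one_right (abs_nonneg _) (abs_le_one_of_unit hv j)
      _ = ∑ j, |S α i j| := one_mul _
  calc (dotProduct v ((S α).mulVec v)) ^ 2
      = |dotProduct v ((S α).mulVec v)| ^ 2 := (sq_abs _).symm
    _ ≤ (∑ i, ∑ j, |S α i j|) ^ 2 := pow_le_pow_left₀ (abs_nonneg _) habs 2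

private lemma exists_eigen_ge {B : Matrix (Fin d) (Fin d) ℝ} (hB : B.IsHermitian)
    {v : Fin d → ℝ} (hv : ∑ i, v i ^ 2 = 1) :
    ∃ (w : Fin d → ℝ) (μ : ℝ), w ≠ 0 ∧ v ⬝ᵥ (B *ᵥ v) ≤ μ ∧ B *ᵥ w = μ • w := by
  have hd : Nonempty (Fin d) := by
    rcases isEmpty_or_nonempty (Fin d) with h | h
    · exact absurd hv (by simp)
    · exact h
  obtain ⟨i₀, hi₀⟩ := Finite.exists_max hB.eigenvalues
  refine ⟨⇑(hB.eigenvectorBasis i₀), hB.eigenvalues i₀, ?_, ?_, hB.mulVec_eigenvectorBasis i₀⟩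
  · intro h0
    exact hB.eigenvectorBasis.orthonormal.ne_zero i₀ (by ext j; exact congrFun h0 j)
  · set U : Matrix (Fin d) (Fin d) ℝ :=
      ((Matrix.IsHermitian.eigenvectorUnitary hB : Matrix.unitaryGroup (Fin d) ℝ) :
        Matrix (Fin d) (Fin d) ℝ) with hU
    have hU1 : U * star U = 1 :=
      (Matrix.mem_unitaryGroup_iff).mp (Matrix.IsHermitian.eigenvectorUnitary hB).2
    set y := star U *ᵥ v with hy
    have hswap : ∀ z, v ⬝ᵥ (U *ᵥ z) = y ⬝ᵥ z := by
      intro z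
      rw [Matrix.dotProduct_mulVec, ← Matrix.mulVec_transpose, hy]
      congr 1
    have hyy : y ⬝ᵥ y = 1 := by
      have h1 : U *ᵥ y = v := by
        rw [hy, Matrix.mulVec_mulVec, hU1, Matrix.one_mulVec]
      have h2 := hswap y
      rw [h1] at h2
      rw [← h2, ← hv]
      simp [dotProduct, sq]
    have hquad : v ⬝ᵥ (B *ᵥ v) = ∑ i, hB.eigenvalues i * (y i) ^ 2 := by
      conv_lhs => rw [hB.spectral_theorem, Unitary.conjStarAlgAut_apply]
      rw [← hU, ← Matrix.mulVec_mulVec, ← Matrix.mulVec_mulVec, hswap, ← hy]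
      simp only [Matrix.mulVec_diagonal, dotProduct, Function.comp_apply,
        RCLike.ofReal_real_eq_id, id_eq]
      exact Finset.sum_congr rfl fun i _ => by ring
    rw [hquad]
    calc ∑ i, hB.eigenvalues i * y i ^ 2
        ≤ ∑ i, hB.eigenvalues i₀ * y i ^ 2 :=
          Finset.sum_le_sum fun i _ => mul_le_mul_of_nonneg_right (hi₀ i) (sq_nonneg _)
      _ = hB.eigenvalues i₀ * (y ⬝ᵥ y) := by
          rw [← Finset.mul_sum]
          congr 1
          simp [dotProduct, sq]
      _ = hB.eigenvalues i₀ := by rw [hyy, mul_one]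

private lemma cont_f (S : Fin k → Matrix (Fin d) (Fin d) ℝ) :
    Continuous fun v : Fin d → ℝ => Real.sqrt (∑ α, (v ⬝ᵥ (S α *ᵥ v)) ^ 2) := by
  apply Real.continuous_sqrt.comp
  apply continuous_finset_sum
  intro α _
  apply Continuous.pow
  simp only [dotProduct, Matrix.mulVec]
  apply continuous_finset_sum
  intro i _
  exact (continuous_apply i).mul
    (continuous_finset_sum _ fun j _ => continuous_const.mul (continuous_apply j))

private lemma kappa_eq_max (S : Fin k → Matrix (Fin d) (Fin d) ℝ)
    (hne : Nonempty {v : Fin d → ℝ // ∑ i, v i ^ 2 = 1}) :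
    ∃ v₀ : {v : Fin d → ℝ // ∑ i, v i ^ 2 = 1},
      kappa S = Real.sqrt (∑ α, (dotProduct v₀.1 ((S α).mulVec v₀.1)) ^ 2) := by
  have hKc : IsCompact {v : Fin d → ℝ | ∑ i, v i ^ 2 = 1} := by
    apply IsCompact.of_isClosed_subset (isCompact_closedBall (0 : Fin d → ℝ) 1)
    · exact isClosed_eq (continuous_finset_sum _ fun i _ => (continuous_apply i).pow 2)
        continuous_const
    · intro v hv
      rw [Metric.mem_closedBall, dist_zero_right]
      rw [pi_norm_le_iff_of_nonneg zero_le_one]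
      intro i
      rw [Real.norm_eq_abs]
      exact abs_le_one_of_unit hv i
  haveI hne2 : Nonempty {v : Fin d → ℝ // ∑ i, v i ^ 2 = 1} := hne
  obtain ⟨v, hvK⟩ := hne
  obtain ⟨v₀, hv₀K, hmax⟩ := hKc.exists_isMaxOn ⟨v, hvK⟩ ((cont_f S).continuousOn)
  refine ⟨⟨v₀, hv₀K⟩, le_antisymm ?_ ?_⟩
  · exact ciSup_le fun w => isMaxOn_iff.mp hmax w.1 w.2
  · exact le_ciSup (kappa_bddAbove S) ⟨v₀, hv₀K⟩

private lemma key_lt {B : Matrix (Fin d) (Fin d) ℝ} (hB : B.IsHermitian)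
    {v : Fin d → ℝ} (hv : ∑ i, v i ^ 2 = 1) {ε r : ℝ} (hε : 0 < ε) (hr : 0 < r)
    (hinv : ∀ t : ℝ, 0 ≤ t → t ≤ r →
      ∀ w : Fin d → ℝ, ((1 : Matrix (Fin d) (Fin d) ℝ) - (ε * t) • B) *ᵥ w = 0 → w = 0) :
    ε * r * (v ⬝ᵥ (B *ᵥ v)) < 1 := by
  by_contra hc
  push_neg at hc
  obtain ⟨w, μ, hw0, hμge, hweig⟩ := exists_eigen_ge hB hv
  have hεr : 0 < ε * r := mul_pos hε hr
  have hcpos : 0 < v ⬝ᵥ (B *ᵥ v) := by nlinarith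
  have hμpos : 0 < μ := lt_of_lt_of_le hcpos hμge
  have ht0 : (0 : ℝ) ≤ 1 / (ε * μ) := by positivity
  have htr : 1 / (ε * μ) ≤ r := by
    rw [div_le_iff₀ (by positivity)]
    nlinarith
  have hz : ((1 : Matrix (Fin d) (Fin d) ℝ) - (ε * (1 / (ε * μ))) • B) *ᵥ w = 0 := by
    rw [Matrix.sub_mulVec, Matrix.one_mulVec, Matrix.smul_mulVec, hweig, smul_smul]
    have h1 : ε * (1 / (ε * μ)) * μ = 1 := by
      field_simp
    rw [h1, one_smul, sub_self]
  exact hw0 (hinv _ ht0 htr w hz)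

private lemma isHermitian_sum_smul {S : Fin k → Matrix (Fin d) (Fin d) ℝ}
    (hS : ∀ α, (S α).IsHermitian) (c : Fin k → ℝ) :
    (∑ α, c α • S α).IsHermitian := by
  show (∑ α, c α • S α)ᴴ = ∑ α, c α • S α
  rw [Matrix.conjTranspose_sum]
  exact Finset.sum_congr rfl fun α _ => by
    rw [Matrix.conjTranspose_smul, star_trivial, (hS α).eq]

private lemma B0_posDef {S : Fin k → Matrix (Fin d) (Fin d) ℝ} (hS : ∀ α, (S α).IsHermitian)
    {ε r : ℝ} (hε : 0 < ε) (hr : 0 < r) (hlt : ε * r * kappa S < 1)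
    (nv : Fin k → ℝ) (hn : Real.sqrt (∑ α, nv α ^ 2) ≤ r) :
    ((1 : Matrix (Fin d) (Fin d) ℝ) - ε • ∑ α, nv α • S α).PosDef := by
  have hAh : (∑ α, nv α • S α).IsHermitian := isHermitian_sum_smul hS nv
  refine Matrix.PosDef.of_dotProduct_mulVec_pos ?_ ?_
  · exact Matrix.isHermitian_one.sub (by
      show (ε • ∑ α, nv α • S α)ᴴ = ε • ∑ α, nv α • S α
      rw [Matrix.conjTranspose_smul, star_trivial, hAh.eq])
  · intro x hx
    have hsx : star x = x := by
      funext i; exact star_trivial _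
    rw [hsx]
    set c := x ⬝ᵥ x with hcdef
    have hceq : c = ∑ i, x i ^ 2 := by simp [hcdef, dotProduct, sq]
    have hc : 0 < c := by
      refine lt_of_le_of_ne ?_ ?_
      · rw [hceq]; exact Finset.sum_nonneg fun i _ => sq_nonneg _
      · intro h
        exact hx (dotProduct_self_eq_zero.mp h.symm)
    set t := (Real.sqrt c)⁻¹ with htdef
    have ht2 : t ^ 2 = c⁻¹ := by
      rw [htdef, inv_pow, Real.sq_sqrt hc.le]
    set v := t • x with hvdef
    have hvunit : ∑ i, v i ^ 2 = 1 := by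
      simp only [hvdef, Pi.smul_apply, smul_eq_mul, mul_pow, ← Finset.mul_sum]
      rw [← hceq, ht2]
      exact inv_mul_cancel₀ hc.ne'
    have hrel : ∀ α, x ⬝ᵥ (S α *ᵥ x) = c * (v ⬝ᵥ (S α *ᵥ v)) := by
      intro α
      have h : v ⬝ᵥ (S α *ᵥ v) = t ^ 2 * (x ⬝ᵥ (S α *ᵥ x)) := by
        rw [hvdef, Matrix.mulVec_smul, dotProduct_smul, smul_dotProduct]
        simp only [smul_eq_mul, sq]; ring
      rw [h, ht2]
      field_simp
    have hCS : ∑ α, nv α * (v ⬝ᵥ (S α *ᵥ v)) ≤ r * kappa S := by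
      have hcs2 : (∑ α, nv α * (v ⬝ᵥ (S α *ᵥ v))) ^ 2
          ≤ (∑ α, nv α ^ 2) * ∑ α, (v ⬝ᵥ (S α *ᵥ v)) ^ 2 :=
        Finset.sum_mul_sq_le_sq_mul_sq _ _ _
      have h1 : Real.sqrt (∑ α, (v ⬝ᵥ (S α *ᵥ v)) ^ 2) ≤ kappa S :=
        le_ciSup (kappa_bddAbove S) (⟨v, hvunit⟩ : {v : Fin d → ℝ // ∑ i, v i ^ 2 = 1})
      calc ∑ α, nv α * (v ⬝ᵥ (S α *ᵥ v))
          ≤ |∑ α, nv α * (v ⬝ᵥ (S α *ᵥ v))| := le_abs_self _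
        _ = Real.sqrt ((∑ α, nv α * (v ⬝ᵥ (S α *ᵥ v))) ^ 2) := (Real.sqrt_sq_eq_abs _).symm
        _ ≤ Real.sqrt ((∑ α, nv α ^ 2) * ∑ α, (v ⬝ᵥ (S α *ᵥ v)) ^ 2) := Real.sqrt_le_sqrt hcs2
        _ = Real.sqrt (∑ α, nv α ^ 2) * Real.sqrt (∑ α, (v ⬝ᵥ (S α *ᵥ v)) ^ 2) :=
            Real.sqrt_mul (Finset.sum_nonneg fun α _ => sq_nonneg _) _
        _ ≤ r * kappa S := mul_le_mul hn h1 (Real.sqrt_nonneg _) hr.le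
    have hquad : x ⬝ᵥ (((1 : Matrix (Fin d) (Fin d) ℝ) - ε • ∑ α, nv α • S α) *ᵥ x)
        = c - ε * ∑ α, nv α * (x ⬝ᵥ (S α *ᵥ x)) := by
      rw [Matrix.sub_mulVec, Matrix.one_mulVec, dotProduct_sub,
        Matrix.smul_mulVec, dotProduct_smul, dot_sum_smul]
      simp [smul_eq_mul, hcdef]
    rw [hquad]
    have hsum : ∑ α, nv α * (x ⬝ᵥ (S α *ᵥ x)) = c * ∑ α, nv α * (v ⬝ᵥ (S α *ᵥ v)) := by
      rw [Finset.mul_sum]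
      exact Finset.sum_congr rfl fun α _ => by rw [hrel α]; ring
    rw [hsum]
    nlinarith [mul_le_mul_of_nonneg_left hCS (mul_pos hε hc).le,
      mul_lt_mul_of_pos_left hlt hc]

end AuxLemmas

section MainLemmas

open Matrix

variable {d k : ℕ} (G : Matrix (Fin d) (Fin d) ℝ) (hG : G.PosDef)
  (H : Fin k → Matrix (Fin d) (Fin d) ℝ)

private lemma sqrt_herm : (hG.posSemidef.sqrt).IsHermitian :=
  hG.posSemidef.sqrt_isHermitian_aux

private lemma sqrt_det_unit : IsUnit (hG.posSemidef.sqrt).det := by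
  have hd : (hG.posSemidef.sqrt).det * (hG.posSemidef.sqrt).det = G.det := by
    rw [← Matrix.det_mul, hG.posSemidef.sqrt_mul_self_aux]
  refine isUnit_iff_ne_zero.mpr fun h0 => ?_
  rw [h0, zero_mul] at hd
  exact hG.det_pos.ne' hd.symm

private lemma sqrt_mul_inv : hG.posSemidef.sqrt * (hG.posSemidef.sqrt)⁻¹ = 1 :=
  Matrix.mul_nonsing_inv _ (sqrt_det_unit G hG)

private lemma sqrt_inv_mul : (hG.posSemidef.sqrt)⁻¹ * hG.posSemidef.sqrt = 1 :=
  Matrix.nonsing_inv_mul _ (sqrt_det_unit G hG)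

private lemma Smat_herm (hH : ∀ α, (H α).IsSymm) (α : Fin k) :
    (Smat G hG H α).IsHermitian := by
  have hHer : (H α).IsHermitian := by
    rw [Matrix.IsHermitian, Matrix.conjTranspose_eq_transpose_of_trivial]
    exact hH α
  have h := Matrix.isHermitian_conjTranspose_mul_mul (hG.posSemidef.sqrt⁻¹) hHer
  rw [(sqrt_herm G hG).inv.eq] at h
  exact h

private lemma blockM_posDef_of (hH : ∀ α, (H α).IsSymm) {ε : ℝ} (nv : Fin k → ℝ) (hε : 0 < ε)
    (hB0 : ((1 : Matrix (Fin d) (Fin d) ℝ) - ε • ∑ α, nv α • Smat G hG H α).PosDef) :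
    (blockM G hG H ε nv).PosDef := by
  have hsqh : (hG.posSemidef.sqrt).IsHermitian := sqrt_herm G hG
  have hB₀h : ((1 : Matrix (Fin d) (Fin d) ℝ) - ε • ∑ α, nv α • Smat G hG H α).IsHermitian :=
    hB0.1
  refine Matrix.PosDef.of_dotProduct_mulVec_pos ?_ ?_
  · rw [blockM, Matrix.isHermitian_fromBlocks_iff]
    refine ⟨?_, by simp, by simp, ?_⟩
    · show _ᴴ = _
      simp only [Matrix.conjTranspose_mul, Matrix.conjTranspose_pow, hsqh.eq, hB₀h.eq,
        Matrix.mul_assoc]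
    · show _ᴴ = _
      rw [Matrix.conjTranspose_smul, star_trivial, Matrix.isHermitian_one.eq]
  · intro x hx
    have hsx : star x = x := by funext i; exact star_trivial _
    rw [hsx, blockM, dot_fromBlocks, dot_PQsqP hsqh hB₀h]
    set a := x ∘ Sum.inl with ha
    set b := x ∘ Sum.inr with hb
    set u := ((1 : Matrix (Fin d) (Fin d) ℝ) - ε • ∑ α, nv α • Smat G hG H α) *ᵥ
      (hG.posSemidef.sqrt *ᵥ a) with hu
    have hu0 : (0 : ℝ) ≤ u ⬝ᵥ u := Finset.sum_nonneg fun i _ => mul_self_nonneg _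
    have hb2 : b ⬝ᵥ ((ε ^ 2 • (1 : Matrix (Fin k) (Fin k) ℝ)) *ᵥ b) = ε ^ 2 * (b ⬝ᵥ b) := by
      rw [Matrix.smul_mulVec, Matrix.one_mulVec, dotProduct_smul, smul_eq_mul]
    have hbb0 : (0 : ℝ) ≤ b ⬝ᵥ b := Finset.sum_nonneg fun i _ => mul_self_nonneg _
    by_cases hA : a = 0
    · have hbne : b ≠ 0 := by
        intro hb0
        apply hx
        funext i
        cases i with
        | inl i => exact congrFun hA i
        | inr i => exact congrFun hb0 i
      have hbb : 0 < b ⬝ᵥ b :=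
        lt_of_le_of_ne hbb0 fun h => hbne (dotProduct_self_eq_zero.mp h.symm)
      rw [hb2]
      nlinarith [mul_pos (pow_pos hε 2) hbb]
    · have hsqa : hG.posSemidef.sqrt *ᵥ a ≠ 0 := by
        intro h
        apply hA
        have h2 := congrArg (fun z => (hG.posSemidef.sqrt)⁻¹ *ᵥ z) h
        simpa [Matrix.mulVec_mulVec, sqrt_inv_mul G hG, Matrix.one_mulVec] using h2
      have hune : u ≠ 0 := by
        intro h
        have hpos := hB0.dotProduct_mulVec_pos hsqa
        rw [show star (hG.posSemidef.sqrt *ᵥ a) = hG.posSemidef.sqrt *ᵥ a from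
          funext fun i => star_trivial _, ← hu, h, dotProduct_zero] at hpos
        exact lt_irrefl _ hpos
      have huu : 0 < u ⬝ᵥ u :=
        lt_of_le_of_ne hu0 fun h => hune (dotProduct_self_eq_zero.mp h.symm)
      rw [hb2]
      nlinarith [mul_nonneg (sq_nonneg ε) hbb0]

private lemma mulVec_inj_of_blockM (hH : ∀ α, (H α).IsSymm) {ε : ℝ} {nv : Fin k → ℝ}
    (hPD : (blockM G hG H ε nv).PosDef) (w : Fin d → ℝ)
    (hw : ((1 : Matrix (Fin d) (Fin d) ℝ) - ε • ∑ α, nv α • Smat G hG H α) *ᵥ w = 0) :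
    w = 0 := by
  by_contra hw0
  have hB₀h : ((1 : Matrix (Fin d) (Fin d) ℝ) - ε • ∑ α, nv α • Smat G hG H α).IsHermitian := by
    have hAh : (∑ α, nv α • Smat G hG H α).IsHermitian :=
      isHermitian_sum_smul (Smat_herm G hG H hH) nv
    exact Matrix.isHermitian_one.sub (by
      show _ᴴ = _
      rw [Matrix.conjTranspose_smul, star_trivial, hAh.eq])
  set x : Fin d → ℝ := (hG.posSemidef.sqrt)⁻¹ *ᵥ w with hxdef
  have hxw : hG.posSemidef.sqrt *ᵥ x = w := by
    rw [hxdef, Matrix.mulVec_mulVec, sqrt_mul_inv G hG, Matrix.one_mulVec]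
  have hx0 : x ≠ 0 := by
    intro h
    apply hw0
    rw [← hxw, h, Matrix.mulVec_zero]
  have hX : (Sum.elim x (0 : Fin k → ℝ)) ≠ 0 := by
    intro h
    exact hx0 (funext fun i => congrFun h (Sum.inl i))
  have hpos := hPD.dotProduct_mulVec_pos hX
  rw [show star (Sum.elim x (0 : Fin k → ℝ)) = Sum.elim x 0 from
    funext fun i => star_trivial _] at hpos
  rw [blockM, dot_fromBlocks, Sum.elim_comp_inl, Sum.elim_comp_inr,
    dot_PQsqP (sqrt_herm G hG) hB₀h, hxw, hw] at hpos
  simp at hpos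

end MainLemmas

open Matrix in
/-- `M(n)` is positive definite for every `n ∈ ℝ^k` with `‖n‖₂ ≤ r` if and only if
`ε·r·κ < 1`. -/
theorem blockM_posDef_iff {d k : ℕ} (G : Matrix (Fin d) (Fin d) ℝ) (hG : G.PosDef)
    (H : Fin k → Matrix (Fin d) (Fin d) ℝ) (hH : ∀ α, (H α).IsSymm)
    (ε r : ℝ) (hε : 0 < ε) (hr : 0 < r) :
    (∀ nv : Fin k → ℝ, Real.sqrt (∑ α, nv α ^ 2) ≤ r → (blockM G hG H ε nv).PosDef) ↔
      ε * r * kappa (Smat G hG H) < 1 := by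
  have hS : ∀ α, (Smat G hG H α).IsHermitian := Smat_herm G hG H hH
  constructor
  · intro hPD
    rcases isEmpty_or_nonempty {v : Fin d → ℝ // ∑ i, v i ^ 2 = 1} with he | hne
    · rw [kappa, Real.iSup_of_isEmpty, mul_zero]
      norm_num
    · obtain ⟨v₀, hv₀⟩ := kappa_eq_max (Smat G hG H) hne
      set κ := kappa (Smat G hG H) with hκdef
      have hκ0 : 0 ≤ κ := hv₀ ▸ Real.sqrt_nonneg _
      rcases eq_or_lt_of_le hκ0 with h0 | hκpos
      · rw [← h0, mul_zero]; norm_num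
      · set s : Fin k → ℝ := fun α => v₀.1 ⬝ᵥ (Smat G hG H α *ᵥ v₀.1) with hsdef
        have hs2 : ∑ α, s α ^ 2 = κ ^ 2 := by
          rw [hv₀, Real.sq_sqrt (Finset.sum_nonneg fun α _ => sq_nonneg _)]
        set B := ∑ α, (s α / κ) • Smat G hG H α with hBdef
        have hBh : B.IsHermitian := isHermitian_sum_smul hS _
        have hvB : v₀.1 ⬝ᵥ (B *ᵥ v₀.1) = κ := by
          rw [hBdef, dot_sum_smul]
          have h1 : ∑ α, s α / κ * (v₀.1 ⬝ᵥ (Smat G hG H α *ᵥ v₀.1)) = (∑ α, s α ^ 2) / κ := by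
            rw [Finset.sum_div]
            refine Finset.sum_congr rfl fun α _ => ?_
            show s α / κ * s α = s α ^ 2 / κ
            ring
          rw [h1, hs2, sq, mul_div_assoc, div_self hκpos.ne', mul_one]
        have hinv : ∀ t : ℝ, 0 ≤ t → t ≤ r →
            ∀ w : Fin d → ℝ, ((1 : Matrix (Fin d) (Fin d) ℝ) - (ε * t) • B) *ᵥ w = 0 →
              w = 0 := by
          intro t ht0 htr w hw
          set nv : Fin k → ℝ := fun α => t * s α / κ with hnvdef
          have hnorm : Real.sqrt (∑ α, nv α ^ 2) ≤ r := by
            have hsum : ∑ α, nv α ^ 2 = t ^ 2 := by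
              simp only [hnvdef, div_pow, mul_pow]
              rw [← Finset.sum_div, ← Finset.mul_sum, hs2]
              field_simp
            rw [hsum, Real.sqrt_sq ht0]
            exact htr
          have hsumB : ∑ α, nv α • Smat G hG H α = t • B := by
            rw [hBdef, Finset.smul_sum]
            refine Finset.sum_congr rfl fun α _ => ?_
            rw [smul_smul]
            congr 1
            rw [hnvdef]
            ring
          refine mulVec_inj_of_blockM G hG H hH (hPD nv hnorm) w ?_
          rw [hsumB, smul_smul]
          exact hw
        have hkey := key_lt hBh v₀.2 hε hr hinv
        rwa [hvB] at hkey
  · intro hlt nv hn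
    exact blockM_posDef_of G hG H hH nv hε (B0_posDef hS hε hr hlt nv hn)
end
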